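/- arXiv:1110.0703 — 2 statements merged into one kernel-verified Lean document; each statement's English description precedes it below -/
import Mathlib

section
/- Let n ≥ 1 be an integer and λ ∈ ℝ with λ ≥ 0, and set μ := √(n² + λ). Then ∫₀¹ ψ₁(λ,ρ) · ρ^{2n}/√(1−ρ²) dρ = √π · Γ(n + 1/2) / (2 · Γ((2 + n − μ)/2) · Γ((2 + n + μ)/2)), where Γ denotes the Euler Gamma function (interpreted so that Γ vanishes at nonpositive integers, in which case both sides are understood accordingly). -/
open Set Filter
open scoped Topology Real

/-- Pochhammer symbol `(d)_k = d(d+1)⋯(d+k−1)` over the reals. -/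
noncomputable def poch (d : ℝ) (k : ℕ) : ℝ := Polynomial.eval d (ascPochhammer ℝ k)

/-- The `k`-th coefficient `(a)_k (b)_k / (k! (c)_k)` of the Gauss hypergeometric series. -/
noncomputable def hypCoeff (a b c : ℝ) (k : ℕ) : ℝ :=
  poch a k * poch b k / ((k.factorial : ℝ) * poch c k)

/-- The Gauss hypergeometric series `F(a,b,c,x) = Σ_k ((a)_k (b)_k / (k! (c)_k)) x^k`. -/
noncomputable def hypF (a b c x : ℝ) : ℝ := ∑' k : ℕ, hypCoeff a b c k * x ^ k

/-- The first hypergeometric solution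
`ψ₁(λ,ρ) = F((n−μ)/2, (n+μ)/2, n + 1/2, ρ²)` with `μ = √(n² + λ)`. -/
noncomputable def psi1 (n : ℕ) (lam ρ : ℝ) : ℝ :=
  hypF (((n : ℝ) - Real.sqrt ((n : ℝ) ^ 2 + lam)) / 2)
    (((n : ℝ) + Real.sqrt ((n : ℝ) ^ 2 + lam)) / 2) ((n : ℝ) + 1 / 2) (ρ ^ 2)

/-- The second hypergeometric solution
`ψ₂(λ,ρ) = ρ^{1−2n} F((1−n−μ)/2, (1−n+μ)/2, 3/2 − n, ρ²)` with `μ = √(n² + λ)`. -/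
noncomputable def psi2 (n : ℕ) (lam ρ : ℝ) : ℝ :=
  hypF ((1 - (n : ℝ) - Real.sqrt ((n : ℝ) ^ 2 + lam)) / 2)
    ((1 - (n : ℝ) + Real.sqrt ((n : ℝ) ^ 2 + lam)) / 2) (3 / 2 - (n : ℝ)) (ρ ^ 2)
    / ρ ^ (2 * n - 1)

/-- The radial equation
`(1−ρ²)·φ''(ρ) + ((2n − (2n+1)ρ²)/ρ)·φ'(ρ) = −λ·φ(ρ)` at the point `ρ`. -/
def RadialEq (n : ℕ) (lam : ℝ) (φ : ℝ → ℝ) (ρ : ℝ) : Prop :=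
  (1 - ρ ^ 2) * deriv (deriv φ) ρ
    + ((2 * (n : ℝ) - (2 * (n : ℝ) + 1) * ρ ^ 2) / ρ) * deriv φ ρ = -lam * φ ρ

/-!
Substituting `t = ρ²` turns the moment `∫₀¹ ρ^(2m) / √(1 - ρ²) dρ` into the Beta integral
`B(m + 1/2, 1/2) / 2 = √π Γ(m + 1/2) / (2 Γ(m + 1))`. Integrating the series of `ψ₁` term by
term therefore replaces the coefficients `(a)_k (b)_k / (k! (n + 1/2)_k)` by those of
`F(a, b, n + 1, 1)`, up to the factor `Γ(n + 1/2) / Γ(n + 1)`. Since `a + b = n`, this is Gauss's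
sum at `c = a + b + 1`, where the partial sums telescope to `(a + 1)_N (b + 1)_N / (N! (c)_N)`;
Euler's limit formula for `Γ` evaluates their limit as `Γ(c) / (Γ(a + 1) Γ(b + 1))`. The same
closed form shows that the terms are `O(1/k²)`, which justifies the interchange of sum and
integral.
-/

open MeasureTheory
open scoped Nat

lemma poch_succ (d : ℝ) (k : ℕ) : poch d (k + 1) = poch d k * (d + k) :=
  ascPochhammer_succ_eval k d

lemma poch_succ_left (d : ℝ) (k : ℕ) : poch d (k + 1) = d * poch (d + 1) k := by
  simp [poch, ascPochhammer_succ_left, Polynomial.eval_comp]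

lemma poch_pos {d : ℝ} (hd : 0 < d) (k : ℕ) : 0 < poch d k :=
  ascPochhammer_pos k d hd

lemma prod_range_add_natCast_eq_poch (d : ℝ) (k : ℕ) :
    ∏ j ∈ Finset.range k, (d + j) = poch d k := by
  induction k with
  | zero => simp [poch]
  | succ k ih => rw [Finset.prod_range_succ, ih, poch_succ]

lemma Gamma_add_natCast_eq_poch_mul {x : ℝ} (hx : 0 < x) (k : ℕ) :
    Real.Gamma (x + k) = poch x k * Real.Gamma x := by
  induction k with
  | zero => simp [poch]
  | succ k ih =>
    rw [Nat.cast_succ, ← add_assoc, Real.Gamma_add_one (by positivity), ih, poch_succ]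
    ring

/-- Euler's limit formula for `1 / Γ`; it also holds at the poles, where `Real.Gamma` is `0`. -/
lemma tendsto_poch_div_factorial_mul_rpow (s : ℝ) :
    Tendsto (fun N : ℕ => poch s N / (N ! * (N : ℝ) ^ (s - 1))) atTop (𝓝 (Real.Gamma s)⁻¹) := by
  by_cases hs : ∃ m : ℕ, s = -m
  · obtain ⟨m, rfl⟩ := hs
    rw [Real.Gamma_neg_nat_eq_zero, inv_zero]
    refine tendsto_const_nhds.congr' ?_
    filter_upwards [eventually_gt_atTop m] with N hN
    rw [poch, ascPochhammer_eval_neg_coe_nat_of_lt hN, zero_div]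
  push Not at hs
  have hlim := (tendsto_natCast_div_add_atTop s).mul
    ((Real.GammaSeq_tendsto_Gamma s).inv₀ (Real.Gamma_ne_zero hs))
  rw [one_mul] at hlim
  refine hlim.congr' ?_
  filter_upwards [eventually_gt_atTop 0] with N hN
  have hN : (N : ℝ) ≠ 0 := by positivity
  have hsN : (N : ℝ) + s ≠ 0 := fun h => hs N (by linarith)
  rw [Real.GammaSeq, Finset.prod_range_succ, prod_range_add_natCast_eq_poch,
    Real.rpow_sub_one hN]
  field_simp
  ring

lemma hypCoeff_succ (a b c : ℝ) (k : ℕ) :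
    hypCoeff a b c (k + 1) = hypCoeff a b c k * ((a + k) * (b + k) / ((k + 1) * (c + k))) := by
  rw [hypCoeff, hypCoeff, poch_succ, poch_succ, poch_succ, Nat.factorial_succ, div_mul_div_comm]
  push_cast
  ring_nf

lemma hypCoeff_succ_left (a b c : ℝ) (k : ℕ) :
    hypCoeff a b c (k + 1) = a * b / ((k + 1) * (c + k)) * hypCoeff (a + 1) (b + 1) c k := by
  rw [hypCoeff, hypCoeff, poch_succ_left, poch_succ_left, poch_succ, Nat.factorial_succ,
    div_mul_div_comm]
  push_cast
  ring_nf

lemma hypCoeff_mul_Gamma_div_Gamma (a b : ℝ) {c d : ℝ} (hc : 0 < c) (hd : 0 < d) (k : ℕ) :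
    hypCoeff a b c k * (Real.Gamma (c + k) / Real.Gamma (d + k))
      = Real.Gamma c / Real.Gamma d * hypCoeff a b d k := by
  have := poch_pos hc k
  have := poch_pos hd k
  have := Real.Gamma_pos_of_pos hc
  have := Real.Gamma_pos_of_pos hd
  rw [Gamma_add_natCast_eq_poch_mul hc, Gamma_add_natCast_eq_poch_mul hd, hypCoeff, hypCoeff]
  field_simp

section GaussSum

variable {a b : ℝ}

lemma sum_range_succ_hypCoeff (hab : 0 < a + b + 1) (N : ℕ) :
    ∑ k ∈ Finset.range (N + 1), hypCoeff a b (a + b + 1) k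
      = hypCoeff (a + 1) (b + 1) (a + b + 1) N := by
  induction N with
  | zero => simp [hypCoeff, poch]
  | succ N ih =>
    have : (N : ℝ) + 1 ≠ 0 := by positivity
    have : a + b + 1 + N ≠ 0 := by positivity
    rw [Finset.sum_range_succ, ih, hypCoeff_succ_left, hypCoeff_succ]
    field_simp
    ring

lemma tendsto_hypCoeff_add_one (hab : 0 < a + b + 1) :
    Tendsto (hypCoeff (a + 1) (b + 1) (a + b + 1)) atTop
      (𝓝 (Real.Gamma (a + b + 1) / (Real.Gamma (a + 1) * Real.Gamma (b + 1)))) := by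
  have h := ((tendsto_poch_div_factorial_mul_rpow (a + 1)).mul
    (tendsto_poch_div_factorial_mul_rpow (b + 1))).div
    (tendsto_poch_div_factorial_mul_rpow (a + b + 1)) (inv_ne_zero (Real.Gamma_pos_of_pos hab).ne')
  rw [show (Real.Gamma (a + 1))⁻¹ * (Real.Gamma (b + 1))⁻¹ / (Real.Gamma (a + b + 1))⁻¹
    = Real.Gamma (a + b + 1) / (Real.Gamma (a + 1) * Real.Gamma (b + 1)) by
      rw [div_inv_eq_mul, ← mul_inv, inv_mul_eq_div]] at h
  refine h.congr' ?_
  filter_upwards [eventually_ne_atTop 0] with N hN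
  have hN : (0 : ℝ) < N := by positivity
  have := poch_pos hab N
  simp only [Pi.div_apply, add_sub_cancel_right, Real.rpow_add hN, hypCoeff]
  field_simp

lemma summable_hypCoeff (hab : 0 ≤ a + b) : Summable (hypCoeff a b (a + b + 1)) := by
  obtain ⟨M, hM⟩ := (tendsto_hypCoeff_add_one (a := a) (b := b) (by linarith)).abs.bddAbove_range
  rw [← summable_nat_add_iff 1]
  have hM0 : 0 ≤ M := (abs_nonneg _).trans (hM ⟨0, rfl⟩)
  refine Summable.of_norm_bounded (g := fun N : ℕ => |a * b| * M / ((N : ℝ) + 1) ^ 2) ?_ ?_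
  · have h := ((summable_nat_add_iff 1).mpr (Real.summable_one_div_nat_pow.mpr one_lt_two)).mul_left
      (|a * b| * M)
    refine h.congr fun N => ?_
    push_cast
    ring
  · intro N
    have hN : (0 : ℝ) < N + 1 := by positivity
    rw [hypCoeff_succ_left, Real.norm_eq_abs, abs_mul, abs_div,
      abs_of_pos (by positivity : (0 : ℝ) < (N + 1) * (a + b + 1 + N)),
      show |a * b| * M / ((N : ℝ) + 1) ^ 2 = |a * b| / ((N + 1) * (N + 1)) * M by ring]
    have hden : ((N : ℝ) + 1) * (N + 1) ≤ (N + 1) * (a + b + 1 + N) :=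
      mul_le_mul_of_nonneg_left (by linarith) hN.le
    exact mul_le_mul (div_le_div_of_nonneg_left (abs_nonneg _) (by positivity) hden) (hM ⟨N, rfl⟩)
      (abs_nonneg _) (by positivity)

/-- Gauss's summation formula `F(a, b, c, 1) = Γ(c) Γ(c - a - b) / (Γ(c - a) Γ(c - b))`
at `c = a + b + 1`. -/
theorem hasSum_hypCoeff (hab : 0 ≤ a + b) :
    HasSum (hypCoeff a b (a + b + 1))
      (Real.Gamma (a + b + 1) / (Real.Gamma (a + 1) * Real.Gamma (b + 1))) := by
  refine (summable_hypCoeff hab).hasSum_iff_tendsto_nat.mpr ?_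
  refine ((tendsto_hypCoeff_add_one (by linarith)).comp (tendsto_sub_atTop_nat 1)).congr' ?_
  filter_upwards [eventually_ge_atTop 1] with N hN
  obtain ⟨N, rfl⟩ := Nat.exists_eq_add_of_le' hN
  simp [sum_range_succ_hypCoeff (a := a) (b := b) (by linarith)]

end GaussSum

lemma ofReal_rpow_mul_one_sub_rpow {x : ℝ} (hx : x ∈ Ioo (0 : ℝ) 1) (u v : ℝ) :
    ((x ^ (u - 1) * (1 - x) ^ (v - 1) : ℝ) : ℂ)
      = (x : ℂ) ^ ((u : ℂ) - 1) * (1 - (x : ℂ)) ^ ((v : ℂ) - 1) := by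
  rw [Complex.ofReal_mul, Complex.ofReal_cpow hx.1.le, Complex.ofReal_cpow (by linarith [hx.2])]
  push_cast
  rfl

lemma image_sq_Ioo_zero_one : (fun ρ : ℝ => ρ ^ 2) '' Ioo 0 1 = Ioo 0 1 := by
  simpa using ContinuousOn.image_Ioo_of_strictMonoOn zero_le_one (continuous_pow 2).continuousOn
    ((pow_left_strictMonoOn₀ (M₀ := ℝ) two_ne_zero).mono fun _ hx => hx.1)

lemma injOn_sq_Ioo_zero_one : InjOn (fun ρ : ℝ => ρ ^ 2) (Ioo 0 1) :=
  (pow_left_strictMonoOn₀ two_ne_zero).injOn.mono fun _ hx => le_of_lt hx.1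

lemma hasDerivWithinAt_sq (s : Set ℝ) (ρ : ℝ) :
    HasDerivWithinAt (fun ρ : ℝ => ρ ^ 2) (2 * ρ) s ρ := by
  simpa using (hasDerivAt_pow 2 ρ).hasDerivWithinAt

lemma abs_two_mul_smul_rpow_sq {ρ : ℝ} (hρ : ρ ∈ Ioo (0 : ℝ) 1) (u v : ℝ) :
    |2 * ρ| • ((ρ ^ 2) ^ (u - 1) * (1 - ρ ^ 2) ^ (v - 1))
      = 2 * (ρ ^ (2 * u - 1) * (1 - ρ ^ 2) ^ (v - 1)) := by
  have h : ρ ^ (2 * u - 1) = ρ * (ρ ^ 2) ^ (u - 1) := by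
    rw [← Real.rpow_natCast, ← Real.rpow_mul hρ.1.le,
      show 2 * u - 1 = 1 + ((2 : ℕ) : ℝ) * (u - 1) by push_cast; ring, Real.rpow_add hρ.1,
      Real.rpow_one]
  rw [abs_of_pos (by linarith [hρ.1]), smul_eq_mul, h]
  ring

section Beta

variable {u v : ℝ}

lemma integrableOn_rpow_mul_one_sub_rpow (hu : 0 < u) (hv : 0 < v) :
    IntegrableOn (fun x : ℝ => x ^ (u - 1) * (1 - x) ^ (v - 1)) (Ioo 0 1) := by
  have h := Complex.betaIntegral_convergent (u := u) (v := v) (by simpa) (by simpa)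
  rw [intervalIntegrable_iff_integrableOn_Ioc_of_le zero_le_one] at h
  exact ((h.mono_set Ioo_subset_Ioc_self).congr_fun
    (fun x hx => (ofReal_rpow_mul_one_sub_rpow hx u v).symm) measurableSet_Ioo).re.congr (by simp)

lemma integral_rpow_mul_one_sub_rpow (hu : 0 < u) (hv : 0 < v) :
    ∫ x in Ioo (0 : ℝ) 1, x ^ (u - 1) * (1 - x) ^ (v - 1)
      = Real.Gamma u * Real.Gamma v / Real.Gamma (u + v) := by
  apply Complex.ofReal_injective
  rw [← integral_complex_ofReal,
    setIntegral_congr_fun measurableSet_Ioo (fun x hx => ofReal_rpow_mul_one_sub_rpow hx u v),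
    ← integral_Ioc_eq_integral_Ioo, ← intervalIntegral.integral_of_le zero_le_one]
  rw [← Complex.betaIntegral, Complex.betaIntegral_eq_Gamma_mul_div _ _ (by simpa) (by simpa)]
  push_cast [← Complex.ofReal_add, Complex.Gamma_ofReal]
  rfl

lemma integrableOn_rpow_mul_one_sub_sq_rpow (hu : 0 < u) (hv : 0 < v) :
    IntegrableOn (fun ρ : ℝ => ρ ^ (2 * u - 1) * (1 - ρ ^ 2) ^ (v - 1)) (Ioo 0 1) := by
  have h := integrableOn_rpow_mul_one_sub_rpow hu hv
  rw [← image_sq_Ioo_zero_one, integrableOn_image_iff_integrableOn_abs_deriv_smul measurableSet_Ioo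
    (fun ρ _ => hasDerivWithinAt_sq _ ρ) injOn_sq_Ioo_zero_one] at h
  have h2 := (h.congr_fun (fun ρ hρ => abs_two_mul_smul_rpow_sq hρ u v) measurableSet_Ioo).const_mul
    (1 / 2)
  exact IntegrableOn.congr_fun h2 (fun ρ _ => by ring) measurableSet_Ioo

lemma integral_rpow_mul_one_sub_sq_rpow (hu : 0 < u) (hv : 0 < v) :
    ∫ ρ in Ioo (0 : ℝ) 1, ρ ^ (2 * u - 1) * (1 - ρ ^ 2) ^ (v - 1)
      = Real.Gamma u * Real.Gamma v / (2 * Real.Gamma (u + v)) := by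
  have h := integral_rpow_mul_one_sub_rpow hu hv
  rw [← image_sq_Ioo_zero_one, integral_image_eq_integral_abs_deriv_smul measurableSet_Ioo
    (fun ρ _ => hasDerivWithinAt_sq _ ρ) injOn_sq_Ioo_zero_one,
    setIntegral_congr_fun measurableSet_Ioo (fun ρ hρ => abs_two_mul_smul_rpow_sq hρ u v),
    integral_const_mul] at h
  linear_combination h / 2

end Beta

lemma pow_div_sqrt_one_sub_sq_eq_rpow {ρ : ℝ} (hρ : ρ ∈ Ioo (0 : ℝ) 1) (m : ℕ) :
    ρ ^ (2 * m) / √(1 - ρ ^ 2)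
      = ρ ^ (2 * ((m : ℝ) + 1 / 2) - 1) * (1 - ρ ^ 2) ^ ((1 / 2 : ℝ) - 1) := by
  have h : 0 ≤ 1 - ρ ^ 2 := by nlinarith [hρ.1, hρ.2]
  rw [show 2 * ((m : ℝ) + 1 / 2) - 1 = ((2 * m : ℕ) : ℝ) by push_cast; ring, Real.rpow_natCast,
    show (1 / 2 : ℝ) - 1 = -(1 / 2) by norm_num, Real.rpow_neg h, ← Real.sqrt_eq_rpow,
    div_eq_mul_inv]

lemma integrableOn_pow_div_sqrt_one_sub_sq (m : ℕ) :
    IntegrableOn (fun ρ : ℝ => ρ ^ (2 * m) / √(1 - ρ ^ 2)) (Ioo 0 1) :=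
  (integrableOn_rpow_mul_one_sub_sq_rpow (by positivity) one_half_pos).congr_fun
    (fun _ hρ => (pow_div_sqrt_one_sub_sq_eq_rpow hρ m).symm) measurableSet_Ioo

lemma integral_pow_div_sqrt_one_sub_sq (m : ℕ) :
    ∫ ρ in Ioo (0 : ℝ) 1, ρ ^ (2 * m) / √(1 - ρ ^ 2)
      = √π / 2 * (Real.Gamma (m + 1 / 2) / Real.Gamma (m + 1)) := by
  rw [setIntegral_congr_fun measurableSet_Ioo (fun _ hρ => pow_div_sqrt_one_sub_sq_eq_rpow hρ m),
    integral_rpow_mul_one_sub_sq_rpow (by positivity) one_half_pos, Real.Gamma_one_half_eq,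
    add_assoc, add_halves]
  ring

lemma integral_tsum_mul_pow_div_sqrt_one_sub_sq (α : ℕ → ℝ) (n : ℕ)
    (hα : Summable fun k : ℕ => |α k| * (Real.Gamma (n + 1 / 2 + k) / Real.Gamma (n + 1 + k))) :
    ∫ ρ in Ioo (0 : ℝ) 1, (∑' k, α k * (ρ ^ 2) ^ k) * ρ ^ (2 * n) / √(1 - ρ ^ 2)
      = √π / 2 * ∑' k, α k * (Real.Gamma (n + 1 / 2 + k) / Real.Gamma (n + 1 + k)) := by
  have hmoment (β : ℝ) (k : ℕ) : ∫ ρ in Ioo (0 : ℝ) 1, β * (ρ ^ (2 * (n + k)) / √(1 - ρ ^ 2))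
      = √π / 2 * (β * (Real.Gamma (n + 1 / 2 + k) / Real.Gamma (n + 1 + k))) := by
    rw [integral_const_mul, integral_pow_div_sqrt_one_sub_sq]
    push_cast
    ring_nf
  have hnorm (k : ℕ) : ∫ ρ in Ioo (0 : ℝ) 1, ‖α k * (ρ ^ (2 * (n + k)) / √(1 - ρ ^ 2))‖
      = √π / 2 * (|α k| * (Real.Gamma (n + 1 / 2 + k) / Real.Gamma (n + 1 + k))) := by
    rw [← hmoment]
    refine setIntegral_congr_fun measurableSet_Ioo fun ρ hρ => ?_
    rw [Real.norm_eq_abs, abs_mul,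
      abs_of_nonneg (div_nonneg (pow_nonneg hρ.1.le _) (Real.sqrt_nonneg _))]
  have hseries : ∀ ρ ∈ Ioo (0 : ℝ) 1, (∑' k, α k * (ρ ^ 2) ^ k) * ρ ^ (2 * n) / √(1 - ρ ^ 2)
      = ∑' k, α k * (ρ ^ (2 * (n + k)) / √(1 - ρ ^ 2)) := by
    intro ρ _
    rw [mul_div_assoc, ← tsum_mul_right]
    congr 1 with k
    ring
  rw [setIntegral_congr_fun measurableSet_Ioo hseries, ← integral_tsum_of_summable_integral_norm
    (fun k => (integrableOn_pow_div_sqrt_one_sub_sq (n + k)).const_mul (α k))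
    (by simpa only [hnorm] using hα.mul_left (√π / 2))]
  simp_rw [hmoment]
  exact tsum_mul_left

theorem psi1_weighted_integral_general (n : ℕ) (lam : ℝ) :
    ∫ ρ in (0 : ℝ)..1, psi1 n lam ρ * ρ ^ (2 * n) / Real.sqrt (1 - ρ ^ 2)
      = Real.sqrt π * Real.Gamma ((n : ℝ) + 1 / 2) /
          (2 * Real.Gamma ((2 + (n : ℝ) - Real.sqrt ((n : ℝ) ^ 2 + lam)) / 2)
            * Real.Gamma ((2 + (n : ℝ) + Real.sqrt ((n : ℝ) ^ 2 + lam)) / 2)) := by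
  set μ := √((n : ℝ) ^ 2 + lam)
  set a := ((n : ℝ) - μ) / 2
  set b := ((n : ℝ) + μ) / 2
  have hab : a + b = n := by ring
  have hgauss := hasSum_hypCoeff (a := a) (b := b) (hab ▸ n.cast_nonneg)
  rw [hab] at hgauss
  have hcoeff (k : ℕ) := hypCoeff_mul_Gamma_div_Gamma a b (c := n + 1 / 2) (d := n + 1)
    (by positivity) (by positivity) k
  have hratio (k : ℕ) : 0 ≤ Real.Gamma (n + 1 / 2 + k) / Real.Gamma (n + 1 + k) :=
    div_nonneg (Real.Gamma_pos_of_pos (by positivity)).le (Real.Gamma_pos_of_pos (by positivity)).le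
  rw [intervalIntegral.integral_of_le zero_le_one, integral_Ioc_eq_integral_Ioo]
  simp only [psi1, hypF]
  rw [integral_tsum_mul_pow_div_sqrt_one_sub_sq _ _ ?_, tsum_congr hcoeff, tsum_mul_left,
    hgauss.tsum_eq]
  · have hΓ : Real.Gamma (n + 1) ≠ 0 := (Real.Gamma_pos_of_pos (by positivity)).ne'
    rw [show (2 + (n : ℝ) - μ) / 2 = a + 1 by ring, show (2 + (n : ℝ) + μ) / 2 = b + 1 by ring]
    field_simp
  · refine ((hgauss.summable.mul_left (Real.Gamma (n + 1 / 2) / Real.Gamma (n + 1))).abs).congr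
      fun k => ?_
    rw [← hcoeff, abs_mul, abs_of_nonneg (hratio k)]

/-- the weighted integral of `ψ₁(λ,·)` equals
`√π Γ(n+1/2) / (2 Γ((2+n−μ)/2) Γ((2+n+μ)/2))` with `μ = √(n²+λ)`. -/
theorem psi1_weighted_integral (n : ℕ) (hn : 1 ≤ n) (lam : ℝ) (hlam : 0 ≤ lam) :
    ∫ ρ in (0 : ℝ)..1, psi1 n lam ρ * ρ ^ (2 * n) / Real.sqrt (1 - ρ ^ 2)
      = Real.sqrt π * Real.Gamma ((n : ℝ) + 1 / 2) /
          (2 * Real.Gamma ((2 + (n : ℝ) - Real.sqrt ((n : ℝ) ^ 2 + lam)) / 2)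
            * Real.Gamma ((2 + (n : ℝ) + Real.sqrt ((n : ℝ) ^ 2 + lam)) / 2)) :=
  psi1_weighted_integral_general n lam
end

section
/- Let n ≥ 1 be an integer. For every positive integer k, set λ_k := k(k + 2n) and define φ_k(ρ) := F(−k/2, n + k/2, n + 1/2, ρ²). Then φ_k is a solution of the radial equation with parameter λ_k on (0,1): for every ρ ∈ (0,1), (1−ρ²)·φ_k''(ρ) + ((2n − (2n+1)ρ²)/ρ)·φ_k'(ρ) = −λ_k·φ_k(ρ); moreover φ_k is not identically zero (indeed φ_k(ρ) → 1 as ρ → 0⁺). -/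
/-!
With `x = ρ²`, the radial equation for `φ(ρ) = F(x)` is four times Gauss's hypergeometric equation
`x(1 - x)F'' + (c - (a + b + 1)x)F' = abF` with `c = n + 1/2`, `a + b = n` and `ab = -λ/4`,
and `a = -k/2`, `b = n + k/2` is such a pair for `λ = k(k + 2n)`. The series `hypF` is Mathlib's
`₂F₁`, whose radius of convergence is at least `1` since `c > 0`. Differentiating it termwise,
the hypergeometric equation says, coefficient by coefficient, that
`(j + 1)(j + c)A_{j+1} = (j + a)(j + b)A_j`, a recurrence that the coefficients
`A_j = (a)_j (b)_j / (j! (c)_j)` satisfy. Continuity of `₂F₁` at `0` gives the limit `₂F₁(0) = 1`.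
-/

open Set Filter
open scoped Topology Real

open FormalMultilinearSeries

section OfScalars

variable {𝕜 : Type*} [RCLike 𝕜]

def derivCoeff (A : ℕ → 𝕜) (j : ℕ) : 𝕜 := (j + 1) * A (j + 1)

theorem norm_natCast_add_one (j : ℕ) : ‖(j : 𝕜) + 1‖ = j + 1 := by
  exact_mod_cast RCLike.norm_natCast (K := 𝕜) (j + 1)

theorem radius_le_radius_derivCoeff (A : ℕ → 𝕜) :
    (ofScalars 𝕜 A).radius ≤ (ofScalars 𝕜 (derivCoeff A)).radius := by
  refine ENNReal.le_of_forall_nnreal_lt fun r hr => ?_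
  obtain ⟨s, hrs, hs⟩ := ENNReal.lt_iff_exists_nnreal_btwn.1 hr
  obtain ⟨C, -, hC⟩ := (ofScalars 𝕜 A).norm_mul_pow_le_of_lt_radius hs
  have hrs' : (r : ℝ) < s := by exact_mod_cast hrs
  have hs0 : (0 : ℝ) < s := r.coe_nonneg.trans_lt hrs'
  set q : ℝ := r / s
  have hq0 : 0 ≤ q := by positivity
  have hq1 : q < 1 := (div_lt_one hs0).2 hrs'
  have hlim : Tendsto (fun j : ℕ => ((j : ℝ) + 1) * q ^ j) atTop (𝓝 0) := by
    simpa [add_mul] using (tendsto_self_mul_const_pow_of_lt_one hq0 hq1).add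
      (tendsto_pow_atTop_nhds_zero_of_lt_one hq0 hq1)
  refine le_radius_of_eventually_le _ (C / s) ?_
  filter_upwards [hlim.eventually (ge_mem_nhds zero_lt_one)] with j hj
  have key : ‖ofScalars 𝕜 (derivCoeff A) j‖ * (r : ℝ) ^ j
      = ((j + 1) * q ^ j) * (‖ofScalars 𝕜 A (j + 1)‖ * (s : ℝ) ^ (j + 1)) / s := by
    simp only [ofScalars_norm, derivCoeff, norm_mul, norm_natCast_add_one, q, div_pow, pow_succ]
    field_simp
  rw [key]
  gcongr
  calc _ ≤ 1 * C := by gcongr; exact hC _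
    _ = C := one_mul C

variable {A : ℕ → 𝕜} {x : 𝕜}

theorem hasSum_ofScalarsSum (hx : x ∈ Metric.eball (0 : 𝕜) (ofScalars 𝕜 A).radius) :
    HasSum (fun j => A j * x ^ j) (ofScalarsSum A x) := by
  have h := (ofScalars 𝕜 A).hasSum hx
  simp only [ofScalars_apply_eq, smul_eq_mul] at h
  exact h

theorem hasDerivAt_ofScalarsSum (hx : x ∈ Metric.eball (0 : 𝕜) (ofScalars 𝕜 A).radius) :
    HasDerivAt (ofScalarsSum A) (ofScalarsSum (derivCoeff A) x) x := by
  rw [mem_eball_zero_iff] at hx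
  obtain ⟨r, hxr, hr⟩ := ENNReal.lt_iff_exists_nnreal_btwn.1 hx
  have hxr' : ‖x‖ < r := by exact_mod_cast hxr
  have hB : Summable fun j => ‖derivCoeff A j‖ * (r : ℝ) ^ j := by
    simpa only [ofScalars_norm] using (ofScalars 𝕜 (derivCoeff A)).summable_norm_mul_pow
      (hr.trans_le (radius_le_radius_derivCoeff A))
  have hu : Summable fun j : ℕ => ‖A j‖ * (j * (r : ℝ) ^ (j - 1)) := by
    refine (summable_nat_add_iff 1).1 ?_
    simpa [derivCoeff, norm_natCast_add_one, mul_comm, mul_left_comm] using hB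
  have hbound : ∀ j : ℕ, ∀ y ∈ Metric.ball (0 : 𝕜) r,
      ‖A j * (j * y ^ (j - 1))‖ ≤ ‖A j‖ * (j * (r : ℝ) ^ (j - 1)) := fun j y hy => by
    rw [mem_ball_zero_iff] at hy
    rw [norm_mul, norm_mul, norm_pow, RCLike.norm_natCast]
    gcongr
  have hderiv : HasDerivAt (fun z => ∑' j, A j * z ^ j)
      (∑' j : ℕ, A j * (j * x ^ (j - 1))) x :=
    hasDerivAt_tsum_of_isPreconnected (t := Metric.ball (0 : 𝕜) r) (y₀ := 0)
      (g := fun j y => A j * y ^ j) (g' := fun j y => A j * (j * y ^ (j - 1)))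
      hu Metric.isOpen_ball (convex_ball 0 (r : ℝ)).isPreconnected
      (fun j y _ => (hasDerivAt_pow j y).const_mul (A j)) hbound
      (Metric.mem_ball_self ((norm_nonneg x).trans_lt hxr'))
      ((summable_nat_add_iff 1).1 (by simp [summable_zero])) (mem_ball_zero_iff.2 hxr')
  have hsum : Summable fun j : ℕ => A j * (j * x ^ (j - 1)) :=
    hu.of_norm_bounded fun j => hbound j x (mem_ball_zero_iff.2 hxr')
  have hval : ofScalarsSum (derivCoeff A) x = ∑' j : ℕ, A j * (j * x ^ (j - 1)) := by
    rw [ofScalars_sum_eq, hsum.tsum_eq_zero_add]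
    simp only [derivCoeff, smul_eq_mul, Nat.cast_add, Nat.cast_one, add_tsub_cancel_right,
      Nat.cast_zero, zero_mul, mul_zero, zero_add]
    exact tsum_congr fun j => by ring
  rw [hval, ofScalarsSum_eq_tsum]
  exact hderiv

theorem mem_eball_radius_derivCoeff (hx : x ∈ Metric.eball (0 : 𝕜) (ofScalars 𝕜 A).radius) :
    x ∈ Metric.eball (0 : 𝕜) (ofScalars 𝕜 (derivCoeff A)).radius :=
  Metric.eball_subset_eball (radius_le_radius_derivCoeff A) hx

theorem hasSum_mul_pow_of_shift {C D : ℕ → 𝕜} {S : 𝕜} (hD₀ : D 0 = 0)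
    (hD : ∀ j, D (j + 1) = C j) (h : HasSum (fun j => C j * x ^ j) S) :
    HasSum (fun j => D j * x ^ j) (x * S) := by
  refine (hasSum_nat_add_iff' 1).1 ?_
  simpa [hD₀, hD, pow_succ, mul_comm, mul_left_comm, mul_assoc] using h.mul_left x

theorem ofScalarsSum_hypergeometric_ode {a b c : 𝕜}
    (hA : ∀ j : ℕ, (j + 1) * (j + c) * A (j + 1) = (j + a) * (j + b) * A j)
    (hx : x ∈ Metric.eball (0 : 𝕜) (ofScalars 𝕜 A).radius) :
    x * (1 - x) * ofScalarsSum (derivCoeff (derivCoeff A)) x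
      + (c - (a + b + 1) * x) * ofScalarsSum (derivCoeff A) x = a * b * ofScalarsSum A x := by
  have hx₁ := mem_eball_radius_derivCoeff hx
  have hx₂ := mem_eball_radius_derivCoeff hx₁
  have hF := hasSum_ofScalarsSum hx
  have hF' := hasSum_ofScalarsSum hx₁
  have hF'' := hasSum_ofScalarsSum hx₂
  have hxF' : HasSum (fun j : ℕ => (j * A j) * x ^ j) (x * ofScalarsSum (derivCoeff A) x) :=
    hasSum_mul_pow_of_shift (by simp) (fun j => by simp [derivCoeff]) hF'
  have hxF'' : HasSum (fun j : ℕ => (j * derivCoeff A j) * x ^ j)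
      (x * ofScalarsSum (derivCoeff (derivCoeff A)) x) :=
    hasSum_mul_pow_of_shift (by simp) (fun j => by simp [derivCoeff]) hF''
  have hxxF'' : HasSum (fun j : ℕ => (j * (j - 1) * A j) * x ^ j)
      (x * (x * ofScalarsSum (derivCoeff (derivCoeff A)) x)) :=
    hasSum_mul_pow_of_shift (by simp) (fun j => by simp [derivCoeff]; ring) hxF''
  have hsum := (((hxF''.sub hxxF'').add (hF'.mul_left c)).sub (hxF'.mul_left (a + b + 1))).sub
    (hF.mul_left (a * b))
  -- the coefficient of `x ^ j` is `(j + 1) * (j + c) * A (j + 1) - (j + a) * (j + b) * A j`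
  have hzero : HasSum (fun _ : ℕ => (0 : 𝕜)) _ := hsum.congr_fun fun j => by
    simp only [derivCoeff]
    linear_combination -(x ^ j) * hA j
  linear_combination hzero.unique hasSum_zero

end OfScalars

section Hypergeometric

theorem ordinaryHypergeometricCoefficient_succ {𝕂 : Type*} [Field 𝕂] [CharZero 𝕂] (a b c : 𝕂)
    {n : ℕ} (hc : (n : 𝕂) ≠ -c) :
    (n + 1) * (n + c) * ordinaryHypergeometricCoefficient a b c (n + 1)
      = (n + a) * (n + b) * ordinaryHypergeometricCoefficient a b c n := by
  have hnc : c + n ≠ 0 := fun h => hc (eq_neg_of_add_eq_zero_right h)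
  have hn : (n : 𝕂) + 1 ≠ 0 := Nat.cast_add_one_ne_zero n
  simp only [ordinaryHypergeometricCoefficient, ascPochhammer_succ_eval, Nat.factorial_succ,
    Nat.cast_mul, Nat.cast_succ, mul_inv]
  generalize (Polynomial.eval c (ascPochhammer 𝕂 n))⁻¹ = q
  field_simp
  ring

variable {𝕂 : Type*} [RCLike 𝕂] {a b c : 𝕂}

theorem one_le_radius_ordinaryHypergeometricSeries (𝔸 : Type*) [NormedDivisionRing 𝔸]
    [NormedAlgebra 𝕂 𝔸] (hc : ∀ k : ℕ, (k : 𝕂) ≠ -c) :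
    1 ≤ (ordinaryHypergeometricSeries 𝔸 a b c).radius := by
  by_cases hab : ∀ k : ℕ, (k : 𝕂) ≠ -a ∧ (k : 𝕂) ≠ -b
  · rw [ordinaryHypergeometricSeries_radius_eq_one 𝔸 a b c
      fun k => ⟨(hab k).1, (hab k).2, hc k⟩]
  push Not at hab
  obtain ⟨k, hk⟩ := hab
  by_cases ha : (k : 𝕂) = -a
  · obtain rfl : a = -(k : 𝕂) := by rw [ha, neg_neg]
    simp [ordinaryHypergeometric_radius_top_of_neg_nat₁]
  · obtain rfl : b = -(k : 𝕂) := by rw [hk ha, neg_neg]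
    simp [ordinaryHypergeometric_radius_top_of_neg_nat₂]

variable {x : 𝕂}

theorem mem_eball_radius_ordinaryHypergeometricCoefficient (hc : ∀ k : ℕ, (k : 𝕂) ≠ -c)
    (hx : ‖x‖ < 1) :
    x ∈ Metric.eball (0 : 𝕂) (ofScalars 𝕂 (ordinaryHypergeometricCoefficient a b c)).radius := by
  refine lt_of_lt_of_le ?_ (one_le_radius_ordinaryHypergeometricSeries 𝕂 hc)
  rwa [edist_zero_right, ← ofReal_norm, ENNReal.ofReal_lt_one]

theorem hasDerivAt_ordinaryHypergeometric (hc : ∀ k : ℕ, (k : 𝕂) ≠ -c) (hx : ‖x‖ < 1) :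
    HasDerivAt (₂F₁ a b c)
      (ofScalarsSum (derivCoeff (ordinaryHypergeometricCoefficient a b c)) x) x :=
  hasDerivAt_ofScalarsSum (mem_eball_radius_ordinaryHypergeometricCoefficient hc hx)

theorem ordinaryHypergeometric_ode (hc : ∀ k : ℕ, (k : 𝕂) ≠ -c) (hx : ‖x‖ < 1) :
    x * (1 - x)
        * ofScalarsSum (derivCoeff (derivCoeff (ordinaryHypergeometricCoefficient a b c))) x
      + (c - (a + b + 1) * x)
        * ofScalarsSum (derivCoeff (ordinaryHypergeometricCoefficient a b c)) x
      = a * b * ₂F₁ a b c x :=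
  ofScalarsSum_hypergeometric_ode (fun j => ordinaryHypergeometricCoefficient_succ a b c (hc j))
    (mem_eball_radius_ordinaryHypergeometricCoefficient hc hx)

end Hypergeometric

theorem hypF_eq_ordinaryHypergeometric (a b c : ℝ) : hypF a b c = ₂F₁ a b c := by
  ext x
  simp only [hypF, hypCoeff, poch, ordinaryHypergeometric_eq_tsum, smul_eq_mul]
  exact tsum_congr fun j => by field_simp

theorem radialEq_comp_sq {n : ℕ} {lam ρ : ℝ} {F F' F'' : ℝ → ℝ} (hρ : ρ ≠ 0)
    (hF : ∀ᶠ x in 𝓝 (ρ ^ 2), HasDerivAt F (F' x) x) (hF' : HasDerivAt F' (F'' (ρ ^ 2)) (ρ ^ 2))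
    (hode : ρ ^ 2 * (1 - ρ ^ 2) * F'' (ρ ^ 2) + (n + 1 / 2 - (n + 1) * ρ ^ 2) * F' (ρ ^ 2)
      = -(lam / 4) * F (ρ ^ 2)) :
    RadialEq n lam (fun t => F (t ^ 2)) ρ := by
  have hsq (t : ℝ) : HasDerivAt (fun t : ℝ => t ^ 2) (2 * t) t := by
    simpa using hasDerivAt_pow 2 t
  have hderiv : deriv (fun t => F (t ^ 2)) =ᶠ[𝓝 ρ] fun t => F' (t ^ 2) * (2 * t) :=
    (((continuous_pow 2).tendsto ρ).eventually hF).mono fun t ht =>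
      (ht.comp (h := fun t => t ^ 2) t (hsq t)).deriv
  have hderiv₂ : HasDerivAt (fun t => F' (t ^ 2) * (2 * t))
      (F'' (ρ ^ 2) * (2 * ρ) * (2 * ρ) + F' (ρ ^ 2) * 2) ρ :=
    (hF'.comp (h := fun t => t ^ 2) ρ (hsq ρ)).mul
      (by simpa using (hasDerivAt_id ρ).const_mul (2 : ℝ))
  unfold RadialEq
  rw [hderiv.deriv_eq, hderiv₂.deriv, hderiv.eq_of_nhds]
  field_simp
  linear_combination 4 * hode

theorem eigenfunction_phi_k_general (n : ℕ) (k : ℕ) :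
    (∀ ρ ∈ Set.Ioo (0 : ℝ) 1,
        RadialEq n ((k : ℝ) * ((k : ℝ) + 2 * (n : ℝ)))
          (fun ρ => hypF (-(k : ℝ) / 2) ((n : ℝ) + (k : ℝ) / 2)
            ((n : ℝ) + 1 / 2) (ρ ^ 2)) ρ) ∧
      Filter.Tendsto
        (fun ρ : ℝ => hypF (-(k : ℝ) / 2) ((n : ℝ) + (k : ℝ) / 2)
          ((n : ℝ) + 1 / 2) (ρ ^ 2))
        (nhdsWithin 0 (Set.Ioi 0)) (nhds 1) := by
  set a : ℝ := -(k : ℝ) / 2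
  set b : ℝ := (n : ℝ) + (k : ℝ) / 2
  set c : ℝ := (n : ℝ) + 1 / 2
  have hc (j : ℕ) : (j : ℝ) ≠ -c :=
    ((neg_neg_of_pos (by positivity : (0 : ℝ) < c)).trans_le j.cast_nonneg).ne'
  have hC {x : ℝ} (hx : ‖x‖ < 1) :=
    mem_eball_radius_ordinaryHypergeometricCoefficient (a := a) (b := b) hc hx
  rw [hypF_eq_ordinaryHypergeometric]
  refine ⟨fun ρ ⟨hρ0, hρ1⟩ => ?_, ?_⟩
  · have hx : ‖ρ ^ 2‖ < 1 := by
      rw [norm_pow, Real.norm_of_nonneg hρ0.le]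
      exact pow_lt_one₀ hρ0.le hρ1 two_ne_zero
    refine radialEq_comp_sq hρ0.ne' ?_
      (hasDerivAt_ofScalarsSum (mem_eball_radius_derivCoeff (hC hx))) ?_
    · filter_upwards [(isOpen_lt continuous_norm continuous_const).mem_nhds hx] with y hy
      exact hasDerivAt_ordinaryHypergeometric hc hy
    · linear_combination ordinaryHypergeometric_ode (a := a) (b := b) hc hx
  · have hsq : Tendsto (fun ρ : ℝ => ρ ^ 2) (𝓝[>] 0) (𝓝 0) := by
      simpa using ((continuous_pow 2).tendsto (0 : ℝ)).mono_left nhdsWithin_le_nhds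
    have h := (hasDerivAt_ordinaryHypergeometric (a := a) (b := b) (x := 0) hc
      (by simp)).continuousAt.tendsto.comp hsq
    rwa [ordinaryHypergeometric_zero] at h

/-- for every positive integer `k`, the function
`φ_k(ρ) = F(−k/2, n+k/2, n+1/2, ρ²)` is a nontrivial solution of the radial
equation with parameter `λ_k = k(k+2n)`; indeed `φ_k(ρ) → 1` as `ρ → 0⁺`. -/
theorem eigenfunction_phi_k (n : ℕ) (hn : 1 ≤ n) (k : ℕ) (hk : 1 ≤ k) :
    (∀ ρ ∈ Set.Ioo (0 : ℝ) 1,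
        RadialEq n ((k : ℝ) * ((k : ℝ) + 2 * (n : ℝ)))
          (fun ρ => hypF (-(k : ℝ) / 2) ((n : ℝ) + (k : ℝ) / 2)
            ((n : ℝ) + 1 / 2) (ρ ^ 2)) ρ) ∧
      Filter.Tendsto
        (fun ρ : ℝ => hypF (-(k : ℝ) / 2) ((n : ℝ) + (k : ℝ) / 2)
          ((n : ℝ) + 1 / 2) (ρ ^ 2))
        (nhdsWithin 0 (Set.Ioi 0)) (nhds 1) :=
  eigenfunction_phi_k_general n k
end
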